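/- Projection of c-cyclical monotonicity onto the j-th block (Lemma 5.4): with c(X₁,...,X_k) = min_{y∈Y} ∑ᵢ cᵢ(Xᵢ,y) and S ⊆ M₁ × ... × Mₘ c-cyclically monotone, for each fixed index j the set S̄ⱼ := {(Xⱼ, y) : ∃ Xᵢ (i ≠ j) with (X₁,...,X_k) ∈ S and y ∈ argmin_{y'} ∑ᵢ cᵢ(Xᵢ, y')} is cⱼ-cyclically monotone as a subset of M_{m_{j-1}+1} × ... × M_{m_j} × Y. -/
import Mathlib


universe u

/-- c-cyclical monotonicity for a cost on a finite dependent product: each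
coordinate slot may be permuted independently. -/
def CMono {ι : Type*} [Fintype ι] {M : ι → Type*} (c : (∀ i, M i) → ℝ)
    (S : Set (∀ i, M i)) : Prop :=
  ∀ (N : ℕ) (x : Fin N → ∀ i, M i), (∀ n, x n ∈ S) →
    ∀ σ : ι → Equiv.Perm (Fin N),
      ∑ n, c (x n) ≤ ∑ n, c (fun i => x (σ i n) i)

/-- The index type for a block of coordinates augmented by the extra variable y. -/
abbrev Aug {ι : Type*} (M : ι → Type u) (Y : Type u) : ι ⊕ Unit → Type _ :=
  fun i' => Sum.elim M (fun _ => Y) i'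

/-- Projection of c-cyclical monotonicity onto the j-th block: for an infimal
convolution cost c(X₁,...,X_k) = min_y ∑ᵢ cᵢ(Xᵢ,y), the projection of a
c-cyclically monotone set to the j-th block together with a minimizing y is
cⱼ-cyclically monotone. -/
theorem cyclical_monotone_projection_block
    {m k : ℕ} {M : Fin m → Type u} {Y : Type u}
    (blk : Fin m → Fin k)
    (cost : ∀ j : Fin k, ((∀ i : {i // blk i = j}, M i.val) → Y → ℝ))
    (c : (∀ i, M i) → ℝ)
    (hc : ∀ x, IsLeast {v | ∃ y : Y, v = ∑ j, cost j (fun i => x i.val) y} (c x))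
    (S : Set (∀ i, M i)) (hS : CMono c S) (j : Fin k) :
    CMono
      (fun z : ∀ i', Aug (fun i : {i // blk i = j} => M i.val) Y i' =>
        cost j (fun i => z (Sum.inl i)) (z (Sum.inr ())))
      {z | ∃ x ∈ S, (∀ i : {i // blk i = j}, z (Sum.inl i) = x i.val) ∧
        ∀ y' : Y,
          (∑ j', cost j' (fun i => x i.val) (z (Sum.inr ()))) ≤
            ∑ j', cost j' (fun i => x i.val) y'} := by
  intro N z hz σ
  simp only [Set.mem_setOf_eq] at hz
  choose x hxS hxz hxmin using hz
  set y : Fin N → Y := fun n => z n (Sum.inr ()) with hy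
  -- permutation on the full space
  set τ : Fin m → Equiv.Perm (Fin N) := fun i =>
    if h : blk i = j then σ (Sum.inl ⟨i, h⟩) else σ (Sum.inr ()) with hτ
  have hmain := hS N x hxS τ
  -- value of c at the original points
  have hcn : ∀ n, c (x n) = ∑ j', cost j' (fun i => x n i.val) (y n) := by
    intro n
    obtain ⟨⟨y₀, hy₀⟩, hlb⟩ := hc (x n)
    refine le_antisymm (hlb ⟨y n, rfl⟩) ?_
    rw [hy₀]; exact hxmin n y₀
  -- upper bound on c at the permuted points
  have hcperm : ∀ n, c (fun i => x (τ i n) i) ≤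
      cost j (fun i => x (σ (Sum.inl i) n) i.val) (y (σ (Sum.inr ()) n)) +
      ∑ j' ∈ Finset.univ.erase j,
        cost j' (fun i => x (σ (Sum.inr ()) n) i.val) (y (σ (Sum.inr ()) n)) := by
    intro n
    obtain ⟨_, hlb⟩ := hc (fun i => x (τ i n) i)
    refine (hlb ⟨y (σ (Sum.inr ()) n), rfl⟩).trans_eq ?_
    rw [← Finset.add_sum_erase _ _ (Finset.mem_univ j)]
    congr 1
    · congr 1
      funext i
      have : τ i.val = σ (Sum.inl ⟨i.val, i.prop⟩) := by
        rw [hτ]; exact dif_pos i.prop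
      rw [this]
    · refine Finset.sum_congr rfl fun j' hj' => ?_
      congr 1
      funext i
      have hne : ¬ blk i.val = j := by
        rw [i.prop]; exact (Finset.mem_erase.mp hj').1
      have : τ i.val = σ (Sum.inr ()) := by rw [hτ]; exact dif_neg hne
      rw [this]
  -- combine
  have key : ∑ n, (cost j (fun i => x n i.val) (y n) +
        ∑ j' ∈ Finset.univ.erase j, cost j' (fun i => x n i.val) (y n)) ≤
      ∑ n, (cost j (fun i => x (σ (Sum.inl i) n) i.val) (y (σ (Sum.inr ()) n)) +
        ∑ j' ∈ Finset.univ.erase j,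
          cost j' (fun i => x (σ (Sum.inr ()) n) i.val) (y (σ (Sum.inr ()) n))) := by
    calc ∑ n, (cost j (fun i => x n i.val) (y n) +
          ∑ j' ∈ Finset.univ.erase j, cost j' (fun i => x n i.val) (y n))
        = ∑ n, c (x n) := by
          refine Finset.sum_congr rfl fun n _ => ?_
          rw [hcn n, ← Finset.add_sum_erase _ _ (Finset.mem_univ j)]
      _ ≤ ∑ n, c (fun i => x (τ i n) i) := hmain
      _ ≤ _ := Finset.sum_le_sum fun n _ => hcperm n
  rw [Finset.sum_add_distrib, Finset.sum_add_distrib] at key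
  have hre : ∑ n, ∑ j' ∈ Finset.univ.erase j,
        cost j' (fun i => x (σ (Sum.inr ()) n) i.val) (y (σ (Sum.inr ()) n)) =
      ∑ n, ∑ j' ∈ Finset.univ.erase j, cost j' (fun i => x n i.val) (y n) :=
    Fintype.sum_equiv (σ (Sum.inr ())) _ _ fun n => rfl
  rw [hre] at key
  have key2 : ∑ n, cost j (fun i => x n i.val) (y n) ≤
      ∑ n, cost j (fun i => x (σ (Sum.inl i) n) i.val) (y (σ (Sum.inr ()) n)) := by
    linarith
  -- translate back to z
  calc ∑ n, cost j (fun i => z n (Sum.inl i)) (z n (Sum.inr ()))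
      = ∑ n, cost j (fun i => x n i.val) (y n) := by
        refine Finset.sum_congr rfl fun n _ => ?_
        congr 1; funext i; exact hxz n i
    _ ≤ ∑ n, cost j (fun i => x (σ (Sum.inl i) n) i.val) (y (σ (Sum.inr ()) n)) := key2
    _ = ∑ n, cost j (fun i => z (σ (Sum.inl i) n) (Sum.inl i)) (z (σ (Sum.inr ()) n) (Sum.inr ())) := by
        refine Finset.sum_congr rfl fun n _ => ?_
        congr 1; funext i; exact (hxz (σ (Sum.inl i) n) i).symm
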